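/- Let m̄ = (m_i)_{i≥1} be a bounded sequence of integers with m_i ≥ 2. Then the group H_m̄ of directed automorphisms along the 0-ray is locally finite: every finite subset of H_m̄ generates a finite subgroup. -/

import Mathlib

open scoped ENNReal
namespace Paper
abbrev Vertex (m : ℕ → ℕ) (n : ℕ) := (i : Fin n) → Fin (m i)
variable {m : ℕ → ℕ}
def restr {n : ℕ} (w : Vertex m (n + 1)) : Vertex m n := fun i => w i.castSucc
def restrLe {n N : ℕ} (h : n ≤ N) (w : Vertex m N) : Vertex m n :=
  fun i => w ⟨i, lt_of_lt_of_le i.2 h⟩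
def AutT (m : ℕ → ℕ) : Subgroup (∀ n, Equiv.Perm (Vertex m n)) where
  carrier := {g | ∀ (n : ℕ) (w : Vertex m (n + 1)), restr (g (n + 1) w) = g n (restr w)}
  one_mem' := by intro n w; rfl
  mul_mem' := by
    intro a b ha hb n w
    show restr ((a (n+1)) ((b (n+1)) w)) = (a n) ((b n) (restr w))
    rw [ha, hb]
  inv_mem' := by
    intro a ha n w
    show restr ((a (n+1))⁻¹ w) = (a n)⁻¹ (restr w)
    apply (a n).injective
    have h1 := ha n ((a (n+1))⁻¹ w)
    rw [show (a (n+1)) ((a (n+1))⁻¹ w) = w from (a (n+1)).apply_symm_apply w] at h1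
    rw [← h1]
    exact ((a n).apply_symm_apply _).symm
def app {n : ℕ} (g : AutT m) (v : Vertex m n) : Vertex m n := g.val n v
theorem restrLe_app (g : AutT m) : ∀ {N n : ℕ} (h : n ≤ N) (w : Vertex m N),
    restrLe h (g.val N w) = g.val n (restrLe h w) := by
  intro N
  induction N with
  | zero =>
    intro n h w
    have hn : n = 0 := Nat.le_zero.mp h
    subst hn; rfl
  | succ N ih =>
    intro n h w
    rcases Nat.eq_or_lt_of_le h with rfl | h'
    · rfl
    · have hN : n ≤ N := Nat.lt_succ_iff.mp h'
      calc restrLe h (g.val (N+1) w) = restrLe hN (restr (g.val (N+1) w)) := rfl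
        _ = restrLe hN (g.val N (restr w)) := by rw [g.prop N w]
        _ = g.val n (restrLe hN (restr w)) := ih hN _
        _ = g.val n (restrLe h w) := rfl
abbrev shift (m : ℕ → ℕ) (n : ℕ) : ℕ → ℕ := fun i => m (n + i)
def vappend {n k : ℕ} (v : Vertex (shift m n) k) (w : Vertex m n) : Vertex m (n + k) :=
  fun i => if h : (i : ℕ) < n then w ⟨i, h⟩
    else Fin.cast (congrArg m (by omega : n + ((i : ℕ) - n) = (i : ℕ)))
      (v ⟨(i : ℕ) - n, by omega⟩)
def topPart {n k : ℕ} (u : Vertex m (n + k)) : Vertex (shift m n) k :=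
  fun i => u ⟨n + i, by omega⟩

theorem topPart_vappend {n k : ℕ} (v : Vertex (shift m n) k) (w : Vertex m n) :
    topPart (vappend v w) = v := by
  funext i
  simp only [topPart, vappend, Fin.val_mk]
  rw [dif_neg (by omega)]
  apply Fin.ext
  simp only [Fin.coe_cast]
  exact congrArg (fun t : Fin k => (v t).1) (Fin.ext (by simp))

theorem restrLe_vappend {n k : ℕ} (v : Vertex (shift m n) k) (w : Vertex m n) :
    restrLe (Nat.le_add_right n k) (vappend v w) = w := by
  funext i
  simp only [restrLe, vappend, Fin.val_mk]
  rw [dif_pos i.2]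

theorem vappend_topPart {n k : ℕ} (u : Vertex m (n + k)) :
    vappend (topPart u) (restrLe (Nat.le_add_right n k) u) = u := by
  funext i
  by_cases h : (i : ℕ) < n
  · simp only [vappend, restrLe]
    rw [dif_pos h]
  · simp only [vappend, topPart, Fin.val_mk]
    rw [dif_neg h]
    apply Fin.ext
    simp only [Fin.coe_cast]
    exact congrArg (fun t : Fin (n+k) => (u t).1) (Fin.ext (by simp; omega))

theorem restr_vappend {n k : ℕ} (v : Vertex (shift m n) (k + 1)) (w : Vertex m n) :
    restr (n := n + k) (vappend (n := n) (k := k + 1) v w) = vappend (restr v) w := by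
  funext i
  by_cases h : (i : ℕ) < n
  · show vappend v w (Fin.castSucc i) = vappend (restr v) w i
    simp only [vappend]
    rw [dif_pos (show ((Fin.castSucc i : Fin (n+k+1)) : ℕ) < n from h), dif_pos h]
    rfl
  · show vappend v w (Fin.castSucc i) = vappend (restr v) w i
    simp only [vappend]
    rw [dif_neg (show ¬ ((Fin.castSucc i : Fin (n+k+1)) : ℕ) < n from h), dif_neg h]
    rfl

def secFun (g : AutT m) {n : ℕ} (w : Vertex m n) (k : ℕ)
    (v : Vertex (shift m n) k) : Vertex (shift m n) k :=
  topPart (g.val (n + k) (vappend v w))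

theorem secFun_spec (g : AutT m) {n : ℕ} (w : Vertex m n) (k : ℕ)
    (v : Vertex (shift m n) k) :
    g.val (n + k) (vappend v w) = vappend (secFun g w k v) (g.val n w) := by
  have h1 : restrLe (Nat.le_add_right n k) (g.val (n + k) (vappend v w)) = g.val n w := by
    rw [restrLe_app, restrLe_vappend]
  conv_lhs => rw [← vappend_topPart (g.val (n + k) (vappend v w))]
  rw [h1]
  rfl

theorem coe_inv_app (g : AutT m) (N : ℕ) (u : Vertex m N) :
    (g⁻¹ : AutT m).val N ((g : AutT m).val N u) = u := by
  have h : ((g⁻¹ : AutT m) : ∀ n, Equiv.Perm (Vertex m n)) = (↑g)⁻¹ := rfl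
  rw [h]
  exact Equiv.symm_apply_apply _ _

theorem secFun_left_inv (g : AutT m) {n : ℕ} (w : Vertex m n) (k : ℕ)
    (v : Vertex (shift m n) k) :
    secFun g⁻¹ (g.val n w) k (secFun g w k v) = v := by
  show topPart ((g⁻¹ : AutT m).val (n+k) (vappend (secFun g w k v) (g.val n w))) = v
  rw [← secFun_spec g w k v, coe_inv_app, topPart_vappend]

def sectionEquiv (g : AutT m) {n : ℕ} (w : Vertex m n) (k : ℕ) :
    Equiv.Perm (Vertex (shift m n) k) where
  toFun := secFun g w k
  invFun := secFun g⁻¹ (g.val n w) k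
  left_inv v := secFun_left_inv g w k v
  right_inv v := by
    have h2 : (g⁻¹ : AutT m)⁻¹ = g := inv_inv g
    have h3 : (g⁻¹ : AutT m).val n (g.val n w) = w := coe_inv_app g n w
    calc secFun g w k (secFun g⁻¹ (g.val n w) k v)
        = secFun (g⁻¹)⁻¹ ((g⁻¹ : AutT m).val n (g.val n w)) k
            (secFun g⁻¹ (g.val n w) k v) := by rw [h2, h3]
      _ = v := secFun_left_inv g⁻¹ (g.val n w) k v

theorem secFun_restr (g : AutT m) {n : ℕ} (w : Vertex m n) (k : ℕ)
    (v : Vertex (shift m n) (k + 1)) :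
    restr (secFun g w (k + 1) v) = secFun g w k (restr v) := by
  show restr (topPart (g.val (n + (k+1)) (vappend v w)))
      = topPart (g.val (n + k) (vappend (restr v) w))
  rw [← restr_vappend (n := n) (k := k) v w, ← g.prop (n + k) (vappend (n := n) (k := k + 1) v w)]
  rfl

/-- The section `g|_w` of a tree automorphism `g` at the level-`n` vertex `w`:
the unique automorphism of the shifted tree satisfying `(vw)·g = (v·g|_w)(w·g)`. -/
def sectionAut (g : AutT m) {n : ℕ} (w : Vertex m n) : AutT (shift m n) :=
  ⟨fun k => sectionEquiv g w k, fun k v => secFun_restr g w k v⟩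


/-! ### Distinguished vertices and predicates -/

/-- The level-`n` vertex `0⋯0` on the `0`-ray. -/
def rayV (hm : ∀ i, 0 < m i) (n : ℕ) : Vertex m n := fun i => ⟨0, hm i⟩

/-- The level-`(n+1)` neighbour `x0⋯0` of the `0`-ray: its only (possibly) non-zero
letter is the leading one, equal to `x`. -/
def nbrV (hm : ∀ i, 0 < m i) {n : ℕ} (x : Fin (m n)) : Vertex m (n + 1) :=
  fun i => if h : (i : ℕ) = n then Fin.cast (congrArg m h).symm x else ⟨0, hm i⟩

/-- The level-`n` vertex obtained from `w0` by prepending zeros. -/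
def padZero (hm : ∀ i, 0 < m i) {n₀ : ℕ} (w0 : Vertex m n₀) (n : ℕ) : Vertex m n :=
  fun i => if h : (i : ℕ) < n₀ then w0 ⟨i, h⟩ else ⟨0, hm i⟩

/-- The level-`(n+1)` vertex `x0⋯0w0`: the word `w0` at the bottom, the letter `x`
in the leading position, and zeros in between. -/
def padLead (hm : ∀ i, 0 < m i) {n₀ : ℕ} (w0 : Vertex m n₀) {n : ℕ} (x : Fin (m n)) :
    Vertex m (n + 1) :=
  fun i => if h : (i : ℕ) < n₀ then w0 ⟨i, h⟩
    else if h2 : (i : ℕ) = n then Fin.cast (congrArg m h2).symm x else ⟨0, hm i⟩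

/-- `w` lies on the `0`-ray. -/
def OnRay {n : ℕ} (w : Vertex m n) : Prop := ∀ i, (w i : ℕ) = 0

/-- `w` is a neighbour of the `0`-ray: its leading letter is non-zero and all other
letters are zero. -/
def IsNbr {n : ℕ} (w : Vertex m n) : Prop :=
  ∃ hn : 0 < n, (w ⟨n - 1, by omega⟩ : ℕ) ≠ 0 ∧
    ∀ i : Fin n, (i : ℕ) < n - 1 → (w i : ℕ) = 0

/-- A *rooted* automorphism: it permutes the first level and all its sections at
vertices of level `≥ 1` are trivial (i.e. it is an element of `Sym(X_{m_1})`). -/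
def IsRooted (g : AutT m) : Prop :=
  ∀ (n : ℕ) (w : Vertex m n), 0 < n → sectionAut g w = 1

/-- A *directed automorphism along the `0`-ray* (an element of `H_m̄`): it fixes the
`0`-ray, its sections away from the ray and its neighbours are trivial, and its
sections at neighbours of the ray are rooted. -/
def IsDirectedAut (g : AutT m) : Prop :=
  (∀ (n : ℕ) (w : Vertex m n), OnRay w → g.val n w = w) ∧
  (∀ (n : ℕ) (w : Vertex m n), ¬ OnRay w → ¬ IsNbr w → sectionAut g w = 1) ∧
  (∀ (n : ℕ) (w : Vertex m n), IsNbr w → IsRooted (sectionAut g w))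

/-- The group `𝒜_n` of `n`-th level sections of `𝒜` along the `0`-ray. -/
def Asub (hm : ∀ i, 0 < m i) (A : Subgroup (AutT m)) (n : ℕ) :
    Subgroup (AutT (shift m n)) :=
  Subgroup.closure {h | ∃ a ∈ A, h = sectionAut a (rayV hm n)}

/-- The group `ℬ_n` generated by the `n`-th level sections of `𝒜` at the neighbours
of the `0`-ray (trivial for `n = 0`, where there are no neighbours). -/
def Bsub (hm : ∀ i, 0 < m i) (A : Subgroup (AutT m)) : (n : ℕ) → Subgroup (AutT (shift m n))
  | 0 => ⊥
  | (k + 1) =>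
    Subgroup.closure {h | ∃ a ∈ A, ∃ x : Fin (m k), (x : ℕ) ≠ 0 ∧ h = sectionAut a (nbrV hm x)}

/-- The condition, for a word `w`, that position `i` is the position situated just
above the lowest non-zero letter of `w`. -/
def SpineCond {n : ℕ} (w : Vertex m n) (i : Fin n) : Prop :=
  ∃ p : Fin n, (w p : ℕ) ≠ 0 ∧ (∀ q : Fin n, (q : ℕ) < (p : ℕ) → (w q : ℕ) = 0) ∧
    (i : ℕ) = (p : ℕ) + 1

open Classical in
/-- The action of the spine-permutation automorphism `h_σ̄`: the letter just above
the lowest non-zero letter is permuted (by the permutation attached to its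
alphabet size); all-zero words are fixed. -/
noncomputable def spineFun (σ : ∀ j : ℕ, Equiv.Perm (Fin j)) {n : ℕ} (w : Vertex m n) :
    Vertex m n :=
  fun i => if SpineCond w i then (σ (m i)) (w i) else w i

/-! ### Probability measures, entropy, random walks -/

/-- `μ` is a probability measure (given by its density on a discrete group/set). -/
def IsProbMeas {G : Type*} (μ : G → ℝ) : Prop := (∀ g, 0 ≤ μ g) ∧ HasSum μ 1

/-- `μ` is symmetric. -/
def IsSymmMeas {G : Type*} [Group G] (μ : G → ℝ) : Prop := ∀ g, μ g⁻¹ = μ g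

/-- Convolution of two measures on a discrete group. -/
noncomputable def conv {G : Type*} [Group G] (μ ν : G → ℝ) : G → ℝ :=
  fun g => ∑' h, μ h * ν (h⁻¹ * g)

open Classical in
/-- `k`-fold convolution power `μ^{*k}` (with `μ^{*0} = δ_e`). -/
noncomputable def convPow {G : Type*} [Group G] (μ : G → ℝ) : ℕ → G → ℝ
  | 0 => fun g => if g = 1 then 1 else 0
  | (k + 1) => conv μ (convPow μ k)

/-- Shannon entropy `H(p) = -∑ p log p` of a discrete measure. -/
noncomputable def entropy {X : Type*} (p : X → ℝ) : ℝ := ∑' x, Real.negMulLog (p x)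

/-- Shannon entropy, valued in `ℝ≥0∞`. -/
noncomputable def entropyE {X : Type*} (p : X → ℝ) : ℝ≥0∞ :=
  ∑' x, ENNReal.ofReal (Real.negMulLog (p x))

/-- The Liouville property: every bounded `μ`-harmonic function is constant on the
subgroup generated by the support of `μ`. -/
def IsLiouville {G : Type*} [Group G] (μ : G → ℝ) : Prop :=
  ∀ f : G → ℝ, (∃ C, ∀ g, |f g| ≤ C) → (∀ g, f g = ∑' h, f (g * h) * μ h) →
    ∀ g ∈ Subgroup.closure (Function.support μ),
      ∀ h ∈ Subgroup.closure (Function.support μ), f g = f h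

/-- The position of the right random walk after `t` steps, as a function of the
increments `s 0, s 1, …` (the group element `s_t ⋯ s_2 s_1`; with this convention,
applying it to a point `x` performs the corresponding right walk on any space the
group acts on from the right). -/
def rwProd {G : Type*} [Group G] {k : ℕ} (s : Fin k → G) (t : ℕ) : G :=
  (((List.ofFn s).take t).reverse).prod

open Classical in
/-- The law of the pair (section/position) of the right `μ`-random walk observed at
the `j`-th visit of the trajectory `v·g_1, v·g_2, …` to the set `W`:
`visitLaw μ act v W sec j (h, u) = P(g at j-th visit has sec = h and position = u)`.
Here `act` is the (right) action used for the trajectory and `sec` the observable. -/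
noncomputable def visitLaw {G X H : Type*} [Group G] (μ : G → ℝ)
    (act : G → X → X) (v : X) (W : Set X) (sec : G → H) (j : ℕ) : H × X → ℝ :=
  fun p =>
    ∑' k : ℕ, ∑' s : Fin k → G,
      (∏ i, μ (s i)) *
        (if ((Finset.range k).filter fun t => act (rwProd s (t + 1)) v ∈ W).card = j
            ∧ act (rwProd s k) v ∈ W
            ∧ (sec (rwProd s k), act (rwProd s k) v) = p
          then 1 else 0)

/-! ### Electrical networks -/

/-- The Dirichlet energy of `f` with respect to the symmetric conductances `c`. -/
noncomputable def dirichlet {V : Type*} [Fintype V] (c : V → V → ℝ) (f : V → ℝ) : ℝ :=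
  (1 / 2) * ∑ u : V, ∑ v : V, c u v * (f u - f v) ^ 2

/-- Effective conductance between the disjoint vertex sets `A` and `B`. -/
noncomputable def effCond {V : Type*} [Fintype V] (c : V → V → ℝ) (A B : Set V) : ℝ :=
  sInf (dirichlet c '' {f | (∀ a ∈ A, f a = 1) ∧ (∀ b ∈ B, f b = 0)})

/-- Effective resistance between `A` and `B`, valued in `ℝ≥0∞` (infinite when the
effective conductance vanishes). -/
noncomputable def effResE {V : Type*} [Fintype V] (c : V → V → ℝ) (A B : Set V) : ℝ≥0∞ :=
  (ENNReal.ofReal (effCond c A B))⁻¹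

open Classical in
/-- Conductances of the Schreier graph of the action on level `n` with (multi-)edges
given by a generating set: `c u v = #{s ∈ gens : u·s = v}` for `u ≠ v`. -/
noncomputable def schreierCond (gens : Set (AutT m)) (n : ℕ) :
    Vertex m n → Vertex m n → ℝ :=
  fun u v => if u = v then 0 else (Set.ncard {s | s ∈ gens ∧ app s u = v} : ℝ)

open Classical in
/-- Conductances of the Schreier graph of the action on level `n`, with weights
`κ s` on the edge corresponding to the generator `s`. -/
noncomputable def schreierCondWt (S : Finset (AutT m)) (κ : AutT m → ℝ) (n : ℕ) :
    Vertex m n → Vertex m n → ℝ :=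
  fun u v => if u = v then 0 else ∑ s ∈ S.filter (fun s => app s u = v), κ s

/-- The set `𝔸_n` of level-`n` vertices where some generator `s ∈ S` has a
non-trivial section lying in `𝒜_n`. -/
def ASet (hm : ∀ i, 0 < m i) (A : Subgroup (AutT m)) (S : Finset (AutT m)) (n : ℕ) :
    Set (Vertex m n) :=
  {w | ∃ s ∈ S, sectionAut s w ∈ Asub hm A n ∧ sectionAut s w ≠ 1}

/-- The set `𝔹_n` of level-`n` vertices where some generator `s ∈ S` has a
non-trivial section lying in `ℬ_n`. -/
def BSet (hm : ∀ i, 0 < m i) (A : Subgroup (AutT m)) (S : Finset (AutT m)) (n : ℕ) :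
    Set (Vertex m n) :=
  {w | ∃ s ∈ S, sectionAut s w ∈ Bsub hm A n ∧ sectionAut s w ≠ 1}

/-- The orbit of a level-`n` vertex under a subgroup `G ≤ Aut(T_m)`. -/
def orbitOf (G : Subgroup (AutT m)) {n : ℕ} (v : Vertex m n) : Set (Vertex m n) :=
  {u | ∃ g : AutT m, g ∈ G ∧ app g v = u}

/-! ### Regular trees and automata -/

/-- The constant valency sequence (regular rooted tree `T_mm`). -/
abbrev constSeq (mm : ℕ) : ℕ → ℕ := fun _ => mm


/-- An invertible automaton over the alphabet of a regular tree: a finite set of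
automorphisms closed under taking sections at one-letter words. -/
def IsAutomaton {mm : ℕ} (A : Finset (AutT (constSeq mm))) : Prop :=
  ∀ a ∈ A, ∀ x : Vertex (constSeq mm) 1, sectionAut a x ∈ A

/-- Bounded activity: for every state `a`, the number of level-`n` words with
non-trivial section is bounded uniformly in `n`. -/
def IsBoundedActivity {mm : ℕ} (A : Finset (AutT (constSeq mm))) : Prop :=
  ∀ a ∈ A, ∃ B : ℕ, ∀ n : ℕ,
    Set.ncard {w : Vertex (constSeq mm) n | sectionAut a w ≠ 1} ≤ B

/-- Word length with respect to a finite symmetric generating set. -/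
noncomputable def wordLen {G : Type*} [Group G] (S : Set G) (g : G) : ℕ :=
  sInf {k | ∃ l : List G, l.length = k ∧ (∀ s ∈ l, s ∈ S) ∧ l.prod = g}


/-! Every element of `H_m̄` fixes the `0`-ray and, on a vertex whose lowest non-zero letter sits
at position `p`, changes at most the letters at positions `p` and `p + 1`: above `p + 1` it acts
through its section at a vertex that is neither on the ray nor a neighbour of it. Automorphisms
with this property ("ray-local" ones) form a group, and such an automorphism is determined by its
permutations of the finite sets `S_n` of level-`(n+2)` vertices whose letters below `n` vanish.
Since `m̄` is bounded by `M`, all these permutations can be read as permutations of `[M]²`. For `g`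
in the group generated by a finite set `F`, the permutation of `S_n` induced by `g` is determined
by those induced by the elements of `F`. As there are only finitely many maps from `F` to the
permutations of `[M]²`, only finitely many such `g` exist. -/

lemma vertex_ext {N : ℕ} {u v : Vertex m N} (h : ∀ i, (u i : ℕ) = v i) : u = v :=
  funext fun i => Fin.ext (h i)

def ZeroBelow (n : ℕ) {N : ℕ} (w : Vertex m N) : Prop :=
  ∀ i : Fin N, (i : ℕ) < n → (w i : ℕ) = 0

lemma onRay_restrLe_iff {n N : ℕ} (h : n ≤ N) (w : Vertex m N) :
    OnRay (restrLe h w) ↔ ZeroBelow n w :=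
  ⟨fun hw i hi => hw ⟨i, hi⟩, fun hw i => hw _ i.2⟩

lemma exists_lowest_ne_zero {N : ℕ} {w : Vertex m N} (hw : ¬ OnRay w) :
    ∃ p : Fin N, (w p : ℕ) ≠ 0 ∧ ZeroBelow p w := by
  obtain ⟨p, hp, hmin⟩ := wellFounded_lt.has_min {i | (w i : ℕ) ≠ 0} (by
    simpa [OnRay, Set.Nonempty] using hw)
  exact ⟨p, hp, fun q hq => by_contra fun h => hmin q h hq⟩

lemma onRay_of_onRay_apply {N : ℕ} {σ : Equiv.Perm (Vertex m N)}
    (hσ : ∀ w, OnRay w → σ w = w) {w : Vertex m N} (h : OnRay (σ w)) : OnRay w := by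
  rwa [σ.injective (hσ _ h)] at h

def IsRayLocalPerm {N : ℕ} (σ : Equiv.Perm (Vertex m N)) : Prop :=
  (∀ w, OnRay w → σ w = w) ∧
  ∀ w (p i : Fin N), (w p : ℕ) ≠ 0 → ZeroBelow p w → (p : ℕ) + 1 < i → σ w i = w i

lemma apply_val_of_zeroBelow {g : AutT m} (hg : ∀ n (w : Vertex m n), OnRay w → g.val n w = w)
    {n N : ℕ} {w : Vertex m N} (hw : ZeroBelow n w) (i : Fin N) (hi : (i : ℕ) < n) :
    g.val N w i = w i := by
  have hray : OnRay (restrLe i.2 w) := (onRay_restrLe_iff _ w).2 fun j hj => hw j (by omega)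
  have hrestr := restrLe_app g i.2 w
  rw [hg _ _ hray] at hrestr
  exact congrFun hrestr ⟨i, Nat.lt_succ_self _⟩

lemma isRayLocalPerm_mul {g h : AutT m} (hg : ∀ N, IsRayLocalPerm (g.val N))
    (hh : ∀ N, IsRayLocalPerm (h.val N)) (N : ℕ) : IsRayLocalPerm ((g * h).val N) := by
  refine ⟨fun w hw => ?_, fun w p i hp hbelow hi => ?_⟩
  · show g.val N (h.val N w) = w
    rw [(hh N).1 w hw, (hg N).1 w hw]
  have hbelow' : ZeroBelow p (h.val N w) := fun q hq => by
    rw [apply_val_of_zeroBelow (fun n => (hh n).1) hbelow q hq]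
    exact hbelow q hq
  -- `h` cannot move the level-`(p+1)` prefix of `w`, which is off the ray, onto the ray.
  have hp' : (h.val N w p : ℕ) ≠ 0 := by
    intro hzero
    have hray : OnRay (h.val (p + 1) (restrLe p.2 w)) := by
      rw [← restrLe_app, onRay_restrLe_iff]
      intro q hq
      rcases Nat.lt_succ_iff_lt_or_eq.1 hq with hq | hq
      · exact hbelow' q hq
      · rwa [show q = p from Fin.ext hq]
    exact hp (onRay_of_onRay_apply (hh _).1 hray ⟨p, Nat.lt_succ_self _⟩)
  show g.val N (h.val N w) i = w i
  rw [(hg N).2 _ p i hp' hbelow' hi, (hh N).2 w p i hp hbelow hi]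

def rayLocalSubmonoid (m : ℕ → ℕ) : Submonoid (AutT m) where
  carrier := {g | ∀ N, IsRayLocalPerm (g.val N)}
  one_mem' _ := ⟨fun _ _ => rfl, fun _ _ _ _ _ _ => rfl⟩
  mul_mem' := isRayLocalPerm_mul

lemma exists_val_inv_eq_val_pow (g : AutT m) (N : ℕ) : ∃ k : ℕ, (g⁻¹).val N = (g ^ k).val N := by
  obtain ⟨k, hk⟩ : (g.val N)⁻¹ ∈ Submonoid.powers (g.val N) :=
    mem_powers_iff_mem_zpowers.2 (inv_mem (Subgroup.mem_zpowers _))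
  exact ⟨k, by simp [← hk]⟩

/-- Ray-locality is a condition on each level separately, and on each (finite) level the inverse
of a permutation is one of its powers; hence the submonoid is a subgroup. -/
def rayLocal (m : ℕ → ℕ) : Subgroup (AutT m) :=
  { rayLocalSubmonoid m with
    inv_mem' := fun {g} hg N => by
      obtain ⟨k, hk⟩ := exists_val_inv_eq_val_pow g N
      rw [hk]
      exact (rayLocalSubmonoid m).pow_mem hg k N }

lemma apply_val_of_sectionAut_eq_one (g : AutT m) {n N : ℕ} (hn : n ≤ N) (u : Vertex m N)
    (hsec : sectionAut g (restrLe hn u) = 1) (i : Fin N) (hi : n ≤ i) : g.val N u i = u i := by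
  obtain ⟨k, rfl⟩ := Nat.exists_eq_add_of_le hn
  set w := restrLe hn u
  have hsplit : g.val (n + k) u = vappend (secFun g w k (topPart u)) (g.val n w) := by
    conv_lhs => rw [← vappend_topPart u]
    exact secFun_spec g w k (topPart u)
  have htop : secFun g w k (topPart u) = topPart u :=
    DFunLike.congr_fun (congrFun (congrArg Subtype.val hsec) k) (topPart u)
  rw [hsplit, htop]
  apply Fin.ext
  simp only [vappend, dif_neg (show ¬ (i : ℕ) < n by omega), Fin.val_cast, topPart]
  exact congrArg (fun j : Fin (n + k) => (u j : ℕ)) (Fin.ext (by simp; omega))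

lemma IsDirectedAut.mem_rayLocal {g : AutT m} (hg : IsDirectedAut g) : g ∈ rayLocal m := by
  refine fun N => ⟨hg.1 N, fun w p i hp _ hi => ?_⟩
  have hle : (p : ℕ) + 2 ≤ N := by omega
  refine apply_val_of_sectionAut_eq_one g hle w (hg.2.1 _ _ ?_ ?_) i (by omega)
  · exact fun hray => hp (hray ⟨p, by omega⟩)
  · rintro ⟨-, -, hzero⟩
    exact hp (hzero ⟨p, by omega⟩ (by simp))

lemma zeroBelow_apply {g : AutT m} (hg : g ∈ rayLocal m) {n N : ℕ} {w : Vertex m N}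
    (hw : ZeroBelow n w) : ZeroBelow n (g.val N w) := fun i hi => by
  rw [apply_val_of_zeroBelow (fun k => (hg k).1) hw i hi]
  exact hw i hi

lemma zeroBelow_apply_iff {g : AutT m} (hg : g ∈ rayLocal m) {n N : ℕ} {w : Vertex m N} :
    ZeroBelow n (g.val N w) ↔ ZeroBelow n w :=
  ⟨fun h => by simpa only [coe_inv_app] using zeroBelow_apply (inv_mem hg) h, zeroBelow_apply hg⟩

def sliceHom (N n : ℕ) : rayLocal m →* Equiv.Perm {w : Vertex m N // ZeroBelow n w} where
  toFun g := (g.1.val N).subtypePerm fun _ => zeroBelow_apply_iff g.2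
  map_one' := rfl
  map_mul' _ _ := rfl

lemma restrLe_padZero (hm : ∀ i, 0 < m i) {k N : ℕ} (h : k ≤ N) (u : Vertex m k) :
    restrLe h (padZero hm u N) = u :=
  funext fun i => dif_pos i.2

lemma zeroBelow_padZero (hm : ∀ i, 0 < m i) {n k : ℕ} {u : Vertex m k} (hu : ZeroBelow n u)
    (N : ℕ) : ZeroBelow n (padZero hm u N) := fun i hi => by
  unfold padZero
  split_ifs
  · exact hu _ hi
  · rfl

lemma val_eq_of_sliceHom_eq (hm : ∀ i, 0 < m i) {g g' : rayLocal m} {n : ℕ}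
    (h : sliceHom (n + 2) n g = sliceHom (n + 2) n g') {k : ℕ} (hk : k ≤ n + 2)
    {u : Vertex m k} (hu : ZeroBelow n u) : g.1.val k u = g'.1.val k u := by
  have hv := congrArg Subtype.val (Equiv.ext_iff.1 h ⟨_, zeroBelow_padZero hm hu (n + 2)⟩)
  calc g.1.val k u = restrLe hk (g.1.val (n + 2) (padZero hm u (n + 2))) := by
        rw [restrLe_app, restrLe_padZero]
    _ = restrLe hk (g'.1.val (n + 2) (padZero hm u (n + 2))) := congrArg _ hv
    _ = g'.1.val k u := by rw [restrLe_app, restrLe_padZero]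

lemma eq_of_sliceHom_eq (hm : ∀ i, 0 < m i) {g g' : rayLocal m}
    (h : ∀ n, sliceHom (n + 2) n g = sliceHom (n + 2) n g') : g = g' := by
  refine Subtype.ext (Subtype.ext (funext fun N => Equiv.ext fun w => ?_))
  by_cases hw : OnRay w
  · exact ((g.2 N).1 w hw).trans ((g'.2 N).1 w hw).symm
  obtain ⟨p, hp, hbelow⟩ := exists_lowest_ne_zero hw
  refine vertex_ext fun i => ?_
  by_cases hi : (p : ℕ) + 1 < i
  · rw [(g.2 N).2 w p i hp hbelow hi, (g'.2 N).2 w p i hp hbelow hi]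
  -- Letter `i ≤ p + 1` is read off the prefix of `w` of length `min N (p + 2)`.
  have hk : min N (p + 2) ≤ N := min_le_left _ _
  have hprefix := val_eq_of_sliceHom_eq hm (h p) (min_le_right N (p + 2))
    (u := restrLe hk w) fun j hj => hbelow ⟨j, by omega⟩ hj
  rw [← restrLe_app, ← restrLe_app] at hprefix
  exact congrArg Fin.val (congrFun hprefix ⟨i, lt_min i.2 (by omega)⟩)

section Slices

variable {M : ℕ} (hbd : ∀ i, m i ≤ M)

def sliceCode (n : ℕ) (w : {w : Vertex m (n + 2) // ZeroBelow n w}) : Fin M × Fin M :=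
  (Fin.castLE (hbd n) (w.1 ⟨n, by omega⟩), Fin.castLE (hbd (n + 1)) (w.1 ⟨n + 1, by omega⟩))

lemma sliceCode_injective (n : ℕ) : Function.Injective (sliceCode hbd n) := by
  intro u v huv
  simp only [sliceCode, Prod.mk.injEq, Fin.castLE_inj] at huv
  refine Subtype.ext (vertex_ext fun i => ?_)
  rcases lt_trichotomy (i : ℕ) n with hi | hi | hi
  · rw [u.2 i hi, v.2 i hi]
  · rw [show i = ⟨n, by omega⟩ from Fin.ext hi, huv.1]
  · rw [show i = ⟨n + 1, by omega⟩ from Fin.ext (by simp only; omega), huv.2]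

noncomputable def sliceCodeHom (n : ℕ) : rayLocal m →* Equiv.Perm (Fin M × Fin M) := by
  classical
  exact (Equiv.Perm.extendDomainHom (Equiv.ofInjective _ (sliceCode_injective hbd n))).comp
    (sliceHom (n + 2) n)

lemma eq_of_sliceCodeHom_eq (hm : ∀ i, 0 < m i) {g g' : rayLocal m}
    (h : ∀ n, sliceCodeHom hbd n g = sliceCodeHom hbd n g') : g = g' := by
  classical
  exact eq_of_sliceHom_eq hm fun n => Equiv.Perm.extendDomainHom_injective _ (h n)

end Slices

lemma finite_closure_of_separating {G K ι : Type*} [Group G] [Group K] [Finite K]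
    (φ : ι → G →* K) (hφ : ∀ g g', (∀ i, φ i g = φ i g') → g = g') {F : Set G}
    (hF : F.Finite) : (Subgroup.closure F : Set G).Finite := by
  have : Finite F := hF.to_subtype
  let restrict : ι → F → K := fun i f => φ i f
  have hdet : ∀ i j, restrict i = restrict j → ∀ g ∈ Subgroup.closure F, φ i g = φ j g :=
    fun i j hij => MonoidHom.eqOn_closure fun f hf => congrFun hij ⟨f, hf⟩
  let Φ : Subgroup.closure F → Set.range restrict → K := fun g d => φ d.2.choose g
  refine Set.finite_coe_iff.1 <|
    Finite.of_injective Φ fun g g' hΦ => Subtype.ext (hφ _ _ fun i => ?_)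
  have hi := (⟨i, rfl⟩ : restrict i ∈ Set.range restrict).choose_spec
  calc φ i g = Φ g ⟨restrict i, i, rfl⟩ := (hdet _ _ hi g g.2).symm
    _ = Φ g' ⟨restrict i, i, rfl⟩ := congrFun hΦ _
    _ = φ i g' := hdet _ _ hi g' g'.2

theorem directed_automorphisms_locally_finite_general
    (m : ℕ → ℕ) (hm : ∀ i, 0 < m i)
    (M : ℕ) (hbd : ∀ i, m i ≤ M)
    (F : Set (AutT m)) (hF : F.Finite) (hdir : ∀ h ∈ F, IsDirectedAut h) :
    ((Subgroup.closure F : Subgroup (AutT m)) : Set (AutT m)).Finite := by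
  have hF' : (Subtype.val ⁻¹' F : Set (rayLocal m)).Finite :=
    hF.preimage Subtype.val_injective.injOn
  have hclosure :
      Subgroup.closure F = (Subgroup.closure (Subtype.val ⁻¹' F)).map (rayLocal m).subtype := by
    rw [MonoidHom.map_closure, Subgroup.coe_subtype, Set.image_preimage_eq_of_subset
      fun g hg => ⟨⟨g, (hdir g hg).mem_rayLocal⟩, rfl⟩]
  rw [hclosure, Subgroup.coe_map]
  exact (finite_closure_of_separating (sliceCodeHom hbd)
    (fun _ _ => eq_of_sliceCodeHom_eq hbd hm) hF').image _

/-- For a bounded valency sequence, the group `H_m̄` of directed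
automorphisms along the `0`-ray is locally finite: every finite set of directed
automorphisms generates a finite subgroup. -/
theorem directed_automorphisms_locally_finite
    (m : ℕ → ℕ) (hm : ∀ i, 0 < m i) (hm2 : ∀ i, 2 ≤ m i)
    (M : ℕ) (hbd : ∀ i, m i ≤ M)
    (F : Set (AutT m)) (hF : F.Finite) (hdir : ∀ h ∈ F, IsDirectedAut h) :
    ((Subgroup.closure F : Subgroup (AutT m)) : Set (AutT m)).Finite :=
  directed_automorphisms_locally_finite_general m hm M hbd F hF hdir

end Paper
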